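/- Let P be a periodic orthogonal projection on ℋ = ℓ²(ℤ^d, ℂ^N), let U be a periodic unitary operator on ℋ, and fix i, j ∈ {1,…,d}. Assume that [P, X_i] and [P, X_j] admit bounded periodic extensions B_i and B_j, and that [U, X_i] and [U, X_j] admit bounded periodic extensions. Set P_U := U P U*. Then [P_U, X_i] and [P_U, X_j] admit bounded periodic extensions B'_i and B'_j, and the traces per unit volume agree: τ( P_U (B'_i B'_j − B'_j B'_i) P_U ) = τ( P (B_i B_j − B_j B_i) P ). -/

import Mathlib

noncomputable section

/-- The lattice `ℤ^d`. -/
abbrev ZLat (d : ℕ) := Fin d → ℤ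

/-- The Hilbert space `ℓ²(ℤ^d, ℂ^N)`. -/
abbrev Hilb (d N : ℕ) := lp (fun _ : ZLat d × Fin N => ℂ) 2

/-- The standard basis vector `δ_x e_s`. -/
def delta {d N : ℕ} (x : ZLat d) (s : Fin N) : Hilb d N := lp.single 2 (x, s) 1

/-- `ψ ∈ ℓ²(ℤ^d, ℂ^N)` is finitely supported. -/
def FinSupp {d N : ℕ} (ψ : Hilb d N) : Prop := (Function.support fun p => ψ p).Finite

open scoped Classical in
/-- The position operator `X_j`, defined (with junk value `0` if the result fails to be
square-summable, which never happens for finitely supported `ψ`) by `(X_j ψ)(x) = x_j ψ(x)`. -/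
def posOp {d N : ℕ} (j : Fin d) (ψ : Hilb d N) : Hilb d N :=
  if h : Memℓp (fun p : ZLat d × Fin N => (p.1 j : ℂ) * ψ p) 2 then ⟨_, h⟩ else 0

/-- A bounded operator `A` on `ℓ²(ℤ^d, ℂ^N)` is periodic, i.e. commutes with all lattice
translations `T_γ`; equivalently, its matrix elements are invariant under simultaneous
translation of both indices. -/
def IsPeriodic {d N : ℕ} (A : Hilb d N →L[ℂ] Hilb d N) : Prop :=
  ∀ (γ x y : ZLat d) (s t : Fin N),
    (inner ℂ (delta (x + γ) s) (A (delta (y + γ) t)) : ℂ) = inner ℂ (delta x s) (A (delta y t))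

/-- `K` is a bounded extension of the commutator `[A, X_j]`. -/
def IsCommExt {d N : ℕ} (A K : Hilb d N →L[ℂ] Hilb d N) (j : Fin d) : Prop :=
  ∀ φ ψ : Hilb d N, FinSupp φ → FinSupp ψ →
    (inner ℂ φ (K ψ) : ℂ) = inner ℂ φ (A (posOp j ψ)) - inner ℂ (posOp j φ) (A ψ)

/-- The trace per unit volume of a bounded periodic operator:
`τ(A) = ∑_{s=1}^N ⟨δ_0 e_s, A δ_0 e_s⟩`. -/
def tau {d N : ℕ} (A : Hilb d N →L[ℂ] Hilb d N) : ℂ :=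
  ∑ s : Fin N, inner ℂ (delta (0 : ZLat d) s) (A (delta 0 s))

/-- `H` has finite range `R`: matrix elements between sites at distance `> R` vanish. -/
def HasFiniteRange {d N : ℕ} (H : Hilb d N →L[ℂ] Hilb d N) (R : ℝ) : Prop :=
  ∀ (x y : ZLat d) (s t : Fin N), R < ‖x - y‖ →
    (inner ℂ (delta x s) (H (delta y t)) : ℂ) = 0


/-! Write `A_k = U* C_k`, where `C_k` extends `[U, X_k]`. Since `[U*, X_k]` extends to
`-U* C_k U*`, the Leibniz rule gives the extension `U (B_k + [A_k, P]) U*` of `[U P U*, X_k]`,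
and cyclicity of `τ` on periodic operators reduces the claim to
`τ(P [B_i + [A_i, P], B_j + [A_j, P]] P) = τ(P [B_i, B_j] P)`. Expanding, with `P B_k P = 0`
(from `P² = P`), the difference is `τ(E_i C_j) - τ(E_j C_i)`, where `E_k` extends `[P U*, X_k]`.
This vanishes: the diagonal kernel of `E_i C_j` is `-x_i x_j (P U*)(0, x) U(x, 0)`, symmetric in
`i` and `j`. -/

section TraceAlgebra

variable {R M : Type*} [Ring R] [AddCommGroup M] {τ : R →+ M}

theorem trace_mul_mul_of_mul_eq_one (hτ : ∀ x y, τ (x * y) = τ (y * x)) {u v : R}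
    (hvu : v * u = 1) (x : R) : τ (u * x * v) = τ x := by
  rw [mul_assoc, hτ, mul_assoc, hvu, mul_one]

theorem trace_mul_mul_idem (hτ : ∀ x y, τ (x * y) = τ (y * x)) {q : R} (hq : q * q = q)
    (x : R) : τ (q * x * q) = τ (q * x) := by
  rw [hτ, ← mul_assoc, hq]

theorem mul_mul_eq_zero_of_mul_add_mul {q b : R} (hq : q * q = q) (hb : q * b + b * q = b) :
    q * b * q = 0 := by
  have : q * b * q + q * b * q = q * b * q := by
    nth_rewrite 3 [← hb]
    calc q * b * q + q * b * q = (q * q) * b * q + q * b * (q * q) := by rw [hq]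
      _ = q * (q * b + b * q) * q := by noncomm_ring
  simpa using this

theorem trace_offDiag_mul_commutator (hτ : ∀ x y, τ (x * y) = τ (y * x)) {q b : R}
    (hq : q * q = q) (hb : q * b * q = 0) (a : R) :
    τ (q * b * (a * q - q * a)) = τ (q * b * a) := by
  have : q * b * (a * q - q * a) = q * (b * a) * q - q * b * q * a := by noncomm_ring
  rw [this, hb, zero_mul, sub_zero, trace_mul_mul_idem hτ hq, mul_assoc]

theorem trace_commutator_mul_offDiag (hτ : ∀ x y, τ (x * y) = τ (y * x)) {q b : R}
    (hq : q * q = q) (hb : q * b * q = 0) (a : R) :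
    τ (q * (a * q - q * a) * b) = -τ (b * q * a) := by
  have : q * (a * q - q * a) * b = q * (a * q * b) - q * q * a * b := by noncomm_ring
  rw [this, hq, map_sub, hτ q, mul_assoc, mul_assoc, ← mul_assoc q, hb, mul_zero, map_zero,
    zero_sub, hτ, mul_assoc]

theorem trace_commutator_mul_commutator (hτ : ∀ x y, τ (x * y) = τ (y * x)) {q : R}
    (hq : q * q = q) (a c : R) :
    τ (q * (a * q - q * a) * (c * q - q * c)) = τ (q * a * q * c) - τ (q * a * c) := by
  have : q * (a * q - q * a) * (c * q - q * c) =
      q * (a * q * c) * q - q * a * (q * q) * c - q * q * (a * c) * q + q * q * a * q * c := by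
    noncomm_ring
  rw [this, hq, map_add, map_sub, map_sub, trace_mul_mul_idem hτ hq,
    trace_mul_mul_idem hτ hq]
  simp only [mul_assoc]
  abel

theorem trace_idem_commutator_add_commutator (hτ : ∀ x y, τ (x * y) = τ (y * x)) {q bi bj : R}
    (hq : q * q = q) (hbi : q * bi + bi * q = bi) (hbj : q * bj + bj * q = bj) (ai aj : R) :
    τ (q * ((bi + (ai * q - q * ai)) * (bj + (aj * q - q * aj)) -
        (bj + (aj * q - q * aj)) * (bi + (ai * q - q * ai))) * q) =
      τ (q * (bi * bj - bj * bi) * q) + (τ (bi * aj - q * ai * aj) - τ (bj * ai - q * aj * ai)) := by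
  have hbi' := mul_mul_eq_zero_of_mul_add_mul hq hbi
  have hbj' := mul_mul_eq_zero_of_mul_add_mul hq hbj
  have expand : q * ((bi + (ai * q - q * ai)) * (bj + (aj * q - q * aj)) -
        (bj + (aj * q - q * aj)) * (bi + (ai * q - q * ai))) =
      q * (bi * bj - bj * bi) +
        (q * bi * (aj * q - q * aj) + q * (ai * q - q * ai) * bj +
          q * (ai * q - q * ai) * (aj * q - q * aj)) -
        (q * bj * (ai * q - q * ai) + q * (aj * q - q * aj) * bi +
          q * (aj * q - q * aj) * (ai * q - q * ai)) := by
    noncomm_ring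
  have hsplit : ∀ b, q * b + b * q = b → ∀ a, τ (b * a) = τ (q * b * a) + τ (b * q * a) :=
    fun b hb a => by rw [← map_add, ← add_mul, hb]
  have hsym : τ (q * ai * q * aj) = τ (q * aj * q * ai) := by rw [mul_assoc, hτ, ← mul_assoc]
  rw [trace_mul_mul_idem hτ hq, trace_mul_mul_idem hτ hq, expand]
  simp only [map_add, map_sub]
  rw [trace_offDiag_mul_commutator hτ hq hbi', trace_offDiag_mul_commutator hτ hq hbj',
    trace_commutator_mul_offDiag hτ hq hbi', trace_commutator_mul_offDiag hτ hq hbj',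
    trace_commutator_mul_commutator hτ hq, trace_commutator_mul_commutator hτ hq, hsym,
    hsplit bi hbi aj, hsplit bj hbj ai]
  abel

/-- Read `bi, ci` as extensions of `[q, X_i]`, `[u, X_i]` and `v = u⁻¹`: then `-(v ci v)` extends
`[v, X_i]`, the factors on the left extend `[u q v, X_i]`, and `hc` says `τ(E_i C_j) = τ(E_j C_i)`
for `E_i` the extension of `[q v, X_i]`. -/
theorem trace_conj_idem_commutator (hτ : ∀ x y, τ (x * y) = τ (y * x))
    {q u v bi bj ci cj : R} (hq : q * q = q) (huv : u * v = 1) (hvu : v * u = 1)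
    (hbi : q * bi + bi * q = bi) (hbj : q * bj + bj * q = bj)
    (hc : τ ((bi * v + q * -(v * ci * v)) * cj) = τ ((bj * v + q * -(v * cj * v)) * ci)) :
    τ (u * q * v * (((ci * q + u * bi) * v + u * q * -(v * ci * v)) *
          ((cj * q + u * bj) * v + u * q * -(v * cj * v)) -
        ((cj * q + u * bj) * v + u * q * -(v * cj * v)) *
          ((ci * q + u * bi) * v + u * q * -(v * ci * v))) * (u * q * v)) =
      τ (q * (bi * bj - bj * bi) * q) := by
  have gauge : ∀ b c, (c * q + u * b) * v + u * q * -(v * c * v) =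
      u * (b + (v * c * q - q * (v * c))) * v := fun b c => by
    calc (c * q + u * b) * v + u * q * -(v * c * v)
        = (u * v) * c * q * v + u * b * v - u * q * (v * c * v) := by rw [huv]; noncomm_ring
      _ = u * (b + (v * c * q - q * (v * c))) * v := by noncomm_ring
  have hconj : ∀ x y, u * x * v * (u * y * v) = u * (x * y) * v := fun x y => by
    calc u * x * v * (u * y * v) = u * x * (v * u) * y * v := by noncomm_ring
      _ = u * (x * y) * v := by rw [hvu]; noncomm_ring
  rw [gauge, gauge, hconj, hconj, ← sub_mul, ← mul_sub, hconj, hconj,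
    trace_mul_mul_of_mul_eq_one hτ hvu, trace_idem_commutator_add_commutator hτ hq hbi hbj,
    add_eq_left, sub_eq_zero]
  convert hc using 2 <;> noncomm_ring

end TraceAlgebra

open scoped InnerProductSpace ComplexConjugate InnerProduct
open ContinuousLinearMap

variable {d N : ℕ}

def matrixElem (A : Hilb d N →L[ℂ] Hilb d N) (p q : ZLat d × Fin N) : ℂ :=
  ⟪(lp.single 2 p 1 : Hilb d N), A (lp.single 2 q 1)⟫_ℂ

theorem inner_single_one_left (p : ZLat d × Fin N) (f : Hilb d N) :
    ⟪(lp.single 2 p 1 : Hilb d N), f⟫_ℂ = f p := by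
  classical
  simp [lp.inner_single_left]

theorem matrixElem_eq_apply (A : Hilb d N →L[ℂ] Hilb d N) (p q : ZLat d × Fin N) :
    matrixElem A p q = A (lp.single 2 q 1) p :=
  inner_single_one_left p _

theorem single_eq_smul_single_one (p : ZLat d × Fin N) (c : ℂ) :
    (lp.single 2 p c : Hilb d N) = c • lp.single 2 p 1 := by
  rw [← lp.single_smul, smul_eq_mul, mul_one]

theorem ext_matrixElem {A B : Hilb d N →L[ℂ] Hilb d N}
    (h : ∀ p q, matrixElem A p q = matrixElem B p q) : A = B := by
  have hcol : ∀ q, A (lp.single 2 q 1) = B (lp.single 2 q 1) := fun q =>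
    lp.ext <| funext fun p => by simpa only [matrixElem_eq_apply] using h p q
  ext1 f
  have hf := lp.hasSum_single ENNReal.ofNat_ne_top f
  refine (hf.mapL A).unique ?_
  convert hf.mapL B using 2 with p
  rw [single_eq_smul_single_one p, map_smul, map_smul, hcol]

theorem matrixElem_adjoint (A : Hilb d N →L[ℂ] Hilb d N) (p q : ZLat d × Fin N) :
    matrixElem (A†) p q = conj (matrixElem A q p) := by
  rw [matrixElem, adjoint_inner_right, ← inner_conj_symm]
  rfl

theorem hasSum_matrixElem_mul (A B : Hilb d N →L[ℂ] Hilb d N) (p q : ZLat d × Fin N) :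
    HasSum (fun r => matrixElem A p r * matrixElem B r q) (matrixElem (A * B) p q) := by
  have h := lp.hasSum_inner (𝕜 := ℂ) ((A†) (lp.single 2 p 1)) (B (lp.single 2 q 1))
  rw [adjoint_inner_left] at h
  refine h.congr_fun fun r => ?_
  rw [RCLike.inner_apply, ← matrixElem_eq_apply, ← matrixElem_eq_apply, matrixElem_adjoint,
    Complex.conj_conj, mul_comm]

theorem matrixElem_one (p q : ZLat d × Fin N) :
    matrixElem (1 : Hilb d N →L[ℂ] Hilb d N) p q = if p = q then 1 else 0 := by
  classical
  rw [matrixElem_eq_apply, one_apply_eq_self, lp.single_apply, Pi.single_apply]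

theorem eq_sum_single {ψ : Hilb d N} {S : Finset (ZLat d × Fin N)} (hS : ∀ p ∉ S, ψ p = 0) :
    ψ = ∑ p ∈ S, ψ p • lp.single 2 p 1 := by
  refine (lp.hasSum_single ENNReal.ofNat_ne_top ψ).unique ?_
  simp only [← single_eq_smul_single_one]
  exact hasSum_sum_of_ne_finset_zero fun p hp => by rw [hS p hp, lp.single_zero]

theorem inner_apply_eq_sum {φ ψ : Hilb d N} {S : Finset (ZLat d × Fin N)}
    (hφ : ∀ p ∉ S, φ p = 0) (hψ : ∀ p ∉ S, ψ p = 0) (A : Hilb d N →L[ℂ] Hilb d N) :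
    ⟪φ, A ψ⟫_ℂ = ∑ p ∈ S, ∑ q ∈ S, conj (φ p) * ψ q * matrixElem A p q := by
  conv_lhs => rw [eq_sum_single hφ, eq_sum_single hψ]
  simp only [map_sum, map_smul, sum_inner, inner_sum, inner_smul_left, inner_smul_right,
    Finset.mul_sum, matrixElem]
  rw [Finset.sum_comm]
  exact Finset.sum_congr rfl fun _ _ => Finset.sum_congr rfl fun _ _ => by ring

theorem isPeriodic_iff {A : Hilb d N →L[ℂ] Hilb d N} :
    IsPeriodic A ↔ ∀ γ p q, matrixElem A (p.1 + γ, p.2) (q.1 + γ, q.2) = matrixElem A p q :=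
  ⟨fun h γ p q => h γ p.1 q.1 p.2 q.2, fun h γ x y s t => h γ (x, s) (y, t)⟩

namespace IsPeriodic

variable {A B : Hilb d N →L[ℂ] Hilb d N}

theorem zero : IsPeriodic (0 : Hilb d N →L[ℂ] Hilb d N) := fun _ _ _ _ _ => by simp

theorem one : IsPeriodic (1 : Hilb d N →L[ℂ] Hilb d N) :=
  isPeriodic_iff.2 fun γ p q => by simp only [matrixElem_one, Prod.ext_iff, add_left_inj]

theorem add (hA : IsPeriodic A) (hB : IsPeriodic B) : IsPeriodic (A + B) :=
  fun γ x y s t => by simp only [add_apply, inner_add_right, hA γ x y s t, hB γ x y s t]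

theorem neg (hA : IsPeriodic A) : IsPeriodic (-A) :=
  fun γ x y s t => by simp only [neg_apply, inner_neg_right, hA γ x y s t]

theorem mul (hA : IsPeriodic A) (hB : IsPeriodic B) : IsPeriodic (A * B) :=
  isPeriodic_iff.2 fun γ p q => by
    refine (hasSum_matrixElem_mul A B _ _).unique ?_
    rw [← ((Equiv.addRight γ).prodCongr (Equiv.refl (Fin N))).hasSum_iff]
    convert hasSum_matrixElem_mul A B p q using 2 with r
    exact congrArg₂ (· * ·) (isPeriodic_iff.1 hA γ p r) (isPeriodic_iff.1 hB γ r q)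

theorem adjoint (hA : IsPeriodic A) : IsPeriodic (A†) :=
  isPeriodic_iff.2 fun γ p q => by
    rw [matrixElem_adjoint, matrixElem_adjoint, isPeriodic_iff.1 hA]

end IsPeriodic

theorem tau_eq_sum_matrixElem (A : Hilb d N →L[ℂ] Hilb d N) :
    tau A = ∑ s, matrixElem A (0, s) (0, s) :=
  rfl

theorem tau_mul_eq_tsum (A B : Hilb d N →L[ℂ] Hilb d N) :
    tau (A * B) = ∑' y, ∑ s, ∑ t, matrixElem A (0, s) (y, t) * matrixElem B (y, t) (0, s) := by
  have hrow (s : Fin N) : HasSum (fun y => ∑ t, matrixElem A (0, s) (y, t) *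
      matrixElem B (y, t) (0, s)) (matrixElem (A * B) (0, s) (0, s)) :=
    (hasSum_matrixElem_mul A B _ _).prod_fiberwise fun _ => hasSum_fintype _
  exact (hasSum_sum fun s _ => hrow s).tsum_eq.symm

theorem IsPeriodic.tau_mul_comm {A B : Hilb d N →L[ℂ] Hilb d N} (hA : IsPeriodic A)
    (hB : IsPeriodic B) : tau (A * B) = tau (B * A) := by
  rw [tau_mul_eq_tsum, tau_mul_eq_tsum, ← (Equiv.neg (ZLat d)).tsum_eq]
  refine tsum_congr fun y => ?_
  rw [Finset.sum_comm]
  refine Finset.sum_congr rfl fun t _ => Finset.sum_congr rfl fun s _ => ?_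
  have hA' := isPeriodic_iff.1 hA (-y) (y, s) (0, t)
  have hB' := isPeriodic_iff.1 hB (-y) (0, t) (y, s)
  simp only [add_neg_cancel, zero_add] at hA' hB'
  rw [Equiv.neg_apply, ← hA', ← hB', mul_comm]

/- `τ` is a trace only on periodic operators, so the ring-theoretic part of the argument is run
in this subring. -/
variable (d N) in
def periodicSubring : Subring (Hilb d N →L[ℂ] Hilb d N) where
  carrier := {A | IsPeriodic A}
  mul_mem' := IsPeriodic.mul
  one_mem' := IsPeriodic.one
  add_mem' := IsPeriodic.add
  zero_mem' := IsPeriodic.zero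
  neg_mem' := IsPeriodic.neg

variable (d N) in
def periodicTau : periodicSubring d N →+ ℂ where
  toFun A := tau (A : Hilb d N →L[ℂ] Hilb d N)
  map_zero' := by simp [tau]
  map_add' A B := by simp [tau, Finset.sum_add_distrib]

theorem periodicTau_apply (A : periodicSubring d N) :
    periodicTau d N A = tau (A : Hilb d N →L[ℂ] Hilb d N) :=
  rfl

theorem periodicTau_mul_comm (A B : periodicSubring d N) :
    periodicTau d N (A * B) = periodicTau d N (B * A) :=
  IsPeriodic.tau_mul_comm A.2 B.2

theorem posOp_apply {j : Fin d} {ψ : Hilb d N} (hψ : FinSupp ψ) (p : ZLat d × Fin N) :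
    posOp j ψ p = (p.1 j : ℂ) * ψ p := by
  have h : Memℓp (fun p : ZLat d × Fin N => (p.1 j : ℂ) * ψ p) 2 :=
    (memℓp_zero (hψ.subset fun _ hp => right_ne_zero_of_mul hp)).of_exponent_ge zero_le
  rw [posOp, dif_pos h]

theorem finSupp_single (p : ZLat d × Fin N) : FinSupp (lp.single 2 p 1 : Hilb d N) :=
  (Set.finite_singleton p).subset Pi.support_single_subset

theorem posOp_single (j : Fin d) (p : ZLat d × Fin N) :
    posOp j (lp.single 2 p 1 : Hilb d N) = (p.1 j : ℂ) • lp.single 2 p 1 := by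
  classical
  refine lp.ext (funext fun q => ?_)
  rw [posOp_apply (finSupp_single p), lp.coeFn_smul, Pi.smul_apply, smul_eq_mul,
    lp.single_apply, Pi.single_apply]
  split_ifs with h <;> simp [h]

theorem IsCommExt.matrixElem_eq {A K : Hilb d N →L[ℂ] Hilb d N} {j : Fin d}
    (hK : IsCommExt A K j) (p q : ZLat d × Fin N) :
    matrixElem K p q = ((q.1 j : ℂ) - p.1 j) * matrixElem A p q := by
  have h := hK _ _ (finSupp_single p) (finSupp_single q)
  rw [posOp_single, posOp_single, map_smul, inner_smul_right, inner_smul_left,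
    map_intCast] at h
  rw [matrixElem, h, sub_mul]
  rfl

theorem isCommExt_iff {A K : Hilb d N →L[ℂ] Hilb d N} {j : Fin d} :
    IsCommExt A K j ↔ ∀ p q, matrixElem K p q = ((q.1 j : ℂ) - p.1 j) * matrixElem A p q := by
  refine ⟨IsCommExt.matrixElem_eq, fun h φ ψ hφ hψ => ?_⟩
  set S := hφ.toFinset ∪ hψ.toFinset
  have hφS : ∀ p ∉ S, φ p = 0 := fun p hp => by
    simpa using fun h' => hp (Finset.mem_union_left _ (hφ.mem_toFinset.2 h'))
  have hψS : ∀ p ∉ S, ψ p = 0 := fun p hp => by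
    simpa using fun h' => hp (Finset.mem_union_right _ (hψ.mem_toFinset.2 h'))
  have hXφS : ∀ p ∉ S, posOp j φ p = 0 := fun p hp => by rw [posOp_apply hφ, hφS p hp, mul_zero]
  have hXψS : ∀ p ∉ S, posOp j ψ p = 0 := fun p hp => by rw [posOp_apply hψ, hψS p hp, mul_zero]
  rw [inner_apply_eq_sum hφS hψS, inner_apply_eq_sum hφS hXψS, inner_apply_eq_sum hXφS hψS,
    ← Finset.sum_sub_distrib]
  refine Finset.sum_congr rfl fun p _ => ?_
  rw [← Finset.sum_sub_distrib]
  refine Finset.sum_congr rfl fun q _ => ?_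
  rw [h, posOp_apply hψ, posOp_apply hφ, map_mul, map_intCast]
  ring

theorem isCommExt_one_zero (j : Fin d) : IsCommExt (1 : Hilb d N →L[ℂ] Hilb d N) 0 j :=
  isCommExt_iff.2 fun p q => by
    rw [matrixElem_one, matrixElem, zero_apply, inner_zero_right]
    split_ifs with h <;> simp [h]

namespace IsCommExt

variable {A K : Hilb d N →L[ℂ] Hilb d N} {j : Fin d}

theorem unique {K' : Hilb d N →L[ℂ] Hilb d N} (hK : IsCommExt A K j) (hK' : IsCommExt A K' j) :
    K = K' :=
  ext_matrixElem fun p q => by rw [hK.matrixElem_eq, hK'.matrixElem_eq]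

theorem mul {B L : Hilb d N →L[ℂ] Hilb d N} (hK : IsCommExt A K j) (hL : IsCommExt B L j) :
    IsCommExt (A * B) (K * B + A * L) j := isCommExt_iff.2 fun p q => by
  have hsum := (hasSum_matrixElem_mul K B p q).add (hasSum_matrixElem_mul A L p q)
  rw [matrixElem, add_apply, inner_add_right]
  refine hsum.unique <|
    ((hasSum_matrixElem_mul A B p q).mul_left ((q.1 j : ℂ) - p.1 j)).congr_fun fun r => ?_
  rw [hK.matrixElem_eq, hL.matrixElem_eq]
  ring

theorem adjoint (hK : IsCommExt A K j) : IsCommExt (A†) (-K†) j :=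
  isCommExt_iff.2 fun p q => by
    rw [matrixElem, neg_apply, inner_neg_right, ← matrixElem, matrixElem_adjoint,
      matrixElem_adjoint, hK.matrixElem_eq, map_mul, map_sub, map_intCast, map_intCast]
    ring

theorem mul_add_mul_of_idempotent (hA : A * A = A) (hK : IsCommExt A K j) :
    A * K + K * A = K := by
  have h := hK.mul hK
  rw [hA] at h
  rw [add_comm, ← hK.unique h]

theorem adjoint_of_unitary (h₁ : A† * A = 1) (h₂ : A * A† = 1) (hK : IsCommExt A K j) :
    IsCommExt (A†) (-(A† * K * A†)) j := by
  have hzero : -K† * A + A† * K = 0 := by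
    have h := hK.adjoint.mul hK
    rw [h₁] at h
    exact h.unique (isCommExt_one_zero j)
  convert hK.adjoint using 1
  calc -(A† * K * A†) = (-K† * A - (-K† * A + A† * K)) * A† := by noncomm_ring
    _ = -K† := by rw [hzero, sub_zero, mul_assoc, h₂, mul_one]

theorem tau_mul_swap {V Ei Ej Ci Cj : Hilb d N →L[ℂ] Hilb d N} {i j : Fin d}
    (hEi : IsCommExt A Ei i) (hEj : IsCommExt A Ej j) (hCi : IsCommExt V Ci i)
    (hCj : IsCommExt V Cj j) : tau (Ei * Cj) = tau (Ej * Ci) := by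
  rw [tau_eq_sum_matrixElem, tau_eq_sum_matrixElem]
  refine Finset.sum_congr rfl fun s _ => ?_
  rw [← (hasSum_matrixElem_mul Ei Cj _ _).tsum_eq, ← (hasSum_matrixElem_mul Ej Ci _ _).tsum_eq]
  refine tsum_congr fun r => ?_
  simp only [hEi.matrixElem_eq, hEj.matrixElem_eq, hCi.matrixElem_eq, hCj.matrixElem_eq,
    Pi.zero_apply, Int.cast_zero]
  ring

end IsCommExt

theorem stmt_6_general {d N : ℕ}
    (P : Hilb d N →L[ℂ] Hilb d N) (hPper : IsPeriodic P)
    (hPidem : P * P = P)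
    (U : Hilb d N →L[ℂ] Hilb d N) (hUper : IsPeriodic U)
    (hU₁ : ContinuousLinearMap.adjoint U * U = 1) (hU₂ : U * ContinuousLinearMap.adjoint U = 1)
    (i j : Fin d)
    (Bi : Hilb d N →L[ℂ] Hilb d N) (hBiper : IsPeriodic Bi) (hBi : IsCommExt P Bi i)
    (Bj : Hilb d N →L[ℂ] Hilb d N) (hBjper : IsPeriodic Bj) (hBj : IsCommExt P Bj j)
    (hUi : ∃ Ci, IsPeriodic Ci ∧ IsCommExt U Ci i)
    (hUj : ∃ Cj, IsPeriodic Cj ∧ IsCommExt U Cj j) :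
    ∃ Bi' Bj' : Hilb d N →L[ℂ] Hilb d N,
      IsPeriodic Bi' ∧ IsCommExt (U * P * ContinuousLinearMap.adjoint U) Bi' i ∧
      IsPeriodic Bj' ∧ IsCommExt (U * P * ContinuousLinearMap.adjoint U) Bj' j ∧
      tau ((U * P * ContinuousLinearMap.adjoint U) * (Bi' * Bj' - Bj' * Bi') *
            (U * P * ContinuousLinearMap.adjoint U)) =
        tau (P * (Bi * Bj - Bj * Bi) * P) := by
  obtain ⟨Ci, hCiper, hCi⟩ := hUi
  obtain ⟨Cj, hCjper, hCj⟩ := hUj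
  have hDi := hCi.adjoint_of_unitary hU₁ hU₂
  have hDj := hCj.adjoint_of_unitary hU₁ hU₂
  let p : periodicSubring d N := ⟨P, hPper⟩
  let u : periodicSubring d N := ⟨U, hUper⟩
  let v : periodicSubring d N := ⟨U†, hUper.adjoint⟩
  let bi : periodicSubring d N := ⟨Bi, hBiper⟩
  let bj : periodicSubring d N := ⟨Bj, hBjper⟩
  let ci : periodicSubring d N := ⟨Ci, hCiper⟩
  let cj : periodicSubring d N := ⟨Cj, hCjper⟩
  have hq : p * p = p := Subtype.ext hPidem
  have huv : u * v = 1 := Subtype.ext hU₂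
  have hvu : v * u = 1 := Subtype.ext hU₁
  have hbi : p * bi + bi * p = bi := Subtype.ext (hBi.mul_add_mul_of_idempotent hPidem)
  have hbj : p * bj + bj * p = bj := Subtype.ext (hBj.mul_add_mul_of_idempotent hPidem)
  have hc : periodicTau d N ((bi * v + p * -(v * ci * v)) * cj) =
      periodicTau d N ((bj * v + p * -(v * cj * v)) * ci) :=
    (hBi.mul hDi).tau_mul_swap (hBj.mul hDj) hCi hCj
  have h := trace_conj_idem_commutator periodicTau_mul_comm hq huv hvu hbi hbj hc
  simp only [periodicTau_apply, Subring.coe_mul, AddSubgroupClass.coe_sub, Subring.coe_add,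
    Subring.coe_neg] at h
  let bi' := (ci * p + u * bi) * v + u * p * -(v * ci * v)
  let bj' := (cj * p + u * bj) * v + u * p * -(v * cj * v)
  exact ⟨bi', bj', bi'.2, (hCi.mul hBi).mul hDi, bj'.2, (hCj.mul hBj).mul hDj, h⟩

/-- Chern–Simons formula / invariance of the Chern marker under unitary
conjugation.  Let `P` be a periodic orthogonal projection and `U` a periodic unitary on
`ℓ²(ℤ^d, ℂ^N)` such that `[P, X_i]`, `[P, X_j]` admit bounded periodic extensions
`B_i`, `B_j` and `[U, X_i]`, `[U, X_j]` admit bounded periodic extensions.  Then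
`P_U := U P U*` has bounded periodic extensions `B'_i`, `B'_j` of its commutators with
`X_i`, `X_j`, and `τ(P_U [B'_i, B'_j] P_U) = τ(P [B_i, B_j] P)`. -/
theorem stmt_6 {d N : ℕ} (hd : 0 < d) (hN : 0 < N)
    (P : Hilb d N →L[ℂ] Hilb d N) (hPper : IsPeriodic P)
    (hPsa : IsSelfAdjoint P) (hPidem : P * P = P)
    (U : Hilb d N →L[ℂ] Hilb d N) (hUper : IsPeriodic U)
    (hU₁ : ContinuousLinearMap.adjoint U * U = 1) (hU₂ : U * ContinuousLinearMap.adjoint U = 1)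
    (i j : Fin d)
    (Bi : Hilb d N →L[ℂ] Hilb d N) (hBiper : IsPeriodic Bi) (hBi : IsCommExt P Bi i)
    (Bj : Hilb d N →L[ℂ] Hilb d N) (hBjper : IsPeriodic Bj) (hBj : IsCommExt P Bj j)
    (hUi : ∃ Ci, IsPeriodic Ci ∧ IsCommExt U Ci i)
    (hUj : ∃ Cj, IsPeriodic Cj ∧ IsCommExt U Cj j) :
    ∃ Bi' Bj' : Hilb d N →L[ℂ] Hilb d N,
      IsPeriodic Bi' ∧ IsCommExt (U * P * ContinuousLinearMap.adjoint U) Bi' i ∧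
      IsPeriodic Bj' ∧ IsCommExt (U * P * ContinuousLinearMap.adjoint U) Bj' j ∧
      tau ((U * P * ContinuousLinearMap.adjoint U) * (Bi' * Bj' - Bj' * Bi') *
            (U * P * ContinuousLinearMap.adjoint U)) =
        tau (P * (Bi * Bj - Bj * Bi) * P) :=
  stmt_6_general P hPper hPidem U hUper hU₁ hU₂ i j Bi hBiper hBi Bj hBjper hBj hUi hUj
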